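/- Fix α, β ∈ (0,1). The infimum, over all continuously differentiable functions m:[0,1/2]→(0,1) with m(0) = β and m(1/2) = α, of (π/4) ∫₀^{1/2} m'(r)² / (m(r)(1−m(r))) dr equals (π/2) ( arcsin(2β−1) − arcsin(2α−1) )². -/

import Mathlib

open MeasureTheory Set Filter

/-! Writing `θ = arcsin (2 m - 1)`, one has `θ' = m' / √(m (1 - m))`, so the integrand is
`θ'²`. By Cauchy–Schwarz, `(θ b - θ a)² ≤ (b - a) ∫ₐᵇ θ'²`, with equality when `θ` is affine;
the minimiser is therefore `m = (1 + sin θ) / 2` with `θ` affine. -/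

theorem sq_intervalIntegral_le_mul_integral_sq {f : ℝ → ℝ} {a b : ℝ} (hab : a ≤ b)
    (hf : IntervalIntegrable f volume a b)
    (hf2 : IntervalIntegrable (fun x => f x ^ 2) volume a b) :
    (∫ x in a..b, f x) ^ 2 ≤ (b - a) * ∫ x in a..b, f x ^ 2 := by
  rcases hab.eq_or_lt with rfl | hab
  · simp
  set Δ := ∫ x in a..b, f x
  have hnonneg : 0 ≤ ∫ x in a..b, ((b - a) * f x - Δ) ^ 2 :=
    intervalIntegral.integral_nonneg hab.le fun x _ => sq_nonneg _
  have hexpand : ∫ x in a..b, ((b - a) * f x - Δ) ^ 2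
      = (b - a) * ((b - a) * ∫ x in a..b, f x ^ 2) - (b - a) * Δ ^ 2 := by
    have hpoint : (fun x => ((b - a) * f x - Δ) ^ 2)
        = fun x => ((b - a) ^ 2 * f x ^ 2 - 2 * (b - a) * Δ * f x) + Δ ^ 2 := by
      funext x; ring
    rw [hpoint, intervalIntegral.integral_add ((hf2.const_mul _).sub (hf.const_mul _))
      intervalIntegrable_const, intervalIntegral.integral_sub (hf2.const_mul _) (hf.const_mul _),
      intervalIntegral.integral_const_mul, intervalIntegral.integral_const_mul,
      intervalIntegral.integral_const, smul_eq_mul]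
    ring
  rw [hexpand] at hnonneg
  nlinarith [sub_pos.2 hab]

theorem sq_sub_le_mul_integral_sq_derivWithin {g : ℝ → ℝ} {a b : ℝ} (hab : a < b)
    (hg : ContDiffOn ℝ 1 g (Icc a b)) :
    (g b - g a) ^ 2 ≤ (b - a) * ∫ x in a..b, derivWithin g (Icc a b) x ^ 2 := by
  have hcont : ContinuousOn (derivWithin g (Icc a b)) (uIcc a b) := by
    rw [uIcc_of_le hab.le]
    exact hg.continuousOn_derivWithin (uniqueDiffOn_Icc hab) le_rfl
  rw [← intervalIntegral.integral_derivWithin_Icc_of_contDiffOn_Icc hg hab.le]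
  exact sq_intervalIntegral_le_mul_integral_sq hab.le hcont.intervalIntegrable
    (hcont.pow 2).intervalIntegrable

theorem hasDerivWithinAt_arcsin_two_mul_sub_one {m : ℝ → ℝ} {m' x : ℝ} {s : Set ℝ}
    (hm : HasDerivWithinAt m m' s x) (hx : m x ∈ Ioo 0 1) :
    HasDerivWithinAt (fun r => Real.arcsin (2 * m r - 1)) (m' / √(m x * (1 - m x))) s x := by
  have hpos : 0 < m x * (1 - m x) := mul_pos hx.1 (sub_pos.2 hx.2)
  have harcsin := (Real.hasDerivAt_arcsin (x := 2 * m x - 1) (by linarith [hx.1])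
    (by linarith [hx.2])).comp_hasDerivWithinAt x ((hm.const_mul 2).sub_const 1)
  refine harcsin.congr_deriv ?_
  rw [show 1 - (2 * m x - 1) ^ 2 = 2 ^ 2 * (m x * (1 - m x)) by ring,
    Real.sqrt_mul (by positivity), Real.sqrt_sq zero_le_two]
  field_simp [(Real.sqrt_pos.2 hpos).ne']

theorem sq_arcsin_sub_le_mul_integral {m : ℝ → ℝ} {a b : ℝ} (hab : a < b)
    (hm : ContDiffOn ℝ 1 m (Icc a b)) (hm01 : ∀ r ∈ Icc a b, m r ∈ Ioo 0 1) :
    (Real.arcsin (2 * m b - 1) - Real.arcsin (2 * m a - 1)) ^ 2 ≤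
      (b - a) * ∫ r in a..b, derivWithin m (Icc a b) r ^ 2 / (m r * (1 - m r)) := by
  set θ : ℝ → ℝ := fun r => Real.arcsin (2 * m r - 1)
  have hθ : ContDiffOn ℝ 1 θ (Icc a b) := fun r hr =>
    (Real.contDiffAt_arcsin (by linarith [(hm01 r hr).1])
      (by linarith [(hm01 r hr).2])).comp_contDiffWithinAt r
      ((contDiffWithinAt_const.mul (hm r hr)).sub contDiffWithinAt_const)
  calc (θ b - θ a) ^ 2 ≤ (b - a) * ∫ r in a..b, derivWithin θ (Icc a b) r ^ 2 :=
        sq_sub_le_mul_integral_sq_derivWithin hab hθ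
    _ = (b - a) * ∫ r in a..b, derivWithin m (Icc a b) r ^ 2 / (m r * (1 - m r)) := by
        congr 1
        refine intervalIntegral.integral_congr fun r hr => ?_
        rw [uIcc_of_le hab.le] at hr
        have hmr := hm01 r hr
        have hderiv := hasDerivWithinAt_arcsin_two_mul_sub_one
          ((hm.differentiableOn one_ne_zero r hr).hasDerivWithinAt) hmr
        rw [hderiv.derivWithin (uniqueDiffOn_Icc hab r hr), div_pow,
          Real.sq_sqrt (mul_pos hmr.1 (sub_pos.2 hmr.2)).le]

theorem sin_mem_Ioo_of_mem_Ioo {t : ℝ} (ht : t ∈ Ioo (-(Real.pi / 2)) (Real.pi / 2)) :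
    Real.sin t ∈ Ioo (-1) 1 := by
  have hcos := Real.cos_pos_of_mem_Ioo ht
  have := Real.sin_sq_add_cos_sq t
  constructor <;> nlinarith

theorem exists_mul_integral_eq_sq_arcsin_sub {a b p q : ℝ} (hab : a < b) (hp : p ∈ Ioo 0 1)
    (hq : q ∈ Ioo 0 1) :
    ∃ m : ℝ → ℝ, ContDiff ℝ 1 m ∧ (∀ r ∈ Icc a b, m r ∈ Ioo 0 1) ∧ m a = p ∧ m b = q ∧
      (b - a) * ∫ r in a..b, derivWithin m (Icc a b) r ^ 2 / (m r * (1 - m r)) =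
        (Real.arcsin (2 * q - 1) - Real.arcsin (2 * p - 1)) ^ 2 := by
  have hp' : 2 * p - 1 ∈ Ioo (-1) 1 := ⟨by linarith [hp.1], by linarith [hp.2]⟩
  have hq' : 2 * q - 1 ∈ Ioo (-1) 1 := ⟨by linarith [hq.1], by linarith [hq.2]⟩
  have harcsin {x : ℝ} (hx : x ∈ Ioo (-1) 1) :
      Real.arcsin x ∈ Ioo (-(Real.pi / 2)) (Real.pi / 2) :=
    ⟨Real.neg_pi_div_two_lt_arcsin.2 hx.1, Real.arcsin_lt_pi_div_two.2 hx.2⟩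
  set θa := Real.arcsin (2 * p - 1)
  set θb := Real.arcsin (2 * q - 1)
  set c := (θb - θa) / (b - a)
  -- equality case of Cauchy–Schwarz: `arcsin (2 m - 1)` is affine
  set θ : ℝ → ℝ := fun r => θa + (r - a) / (b - a) * (θb - θa)
  set m : ℝ → ℝ := fun r => (1 + Real.sin (θ r)) / 2
  have hθ : ∀ r ∈ Icc a b, θ r ∈ Ioo (-(Real.pi / 2)) (Real.pi / 2) := fun r hr =>
    (convex_Ioo _ _).add_smul_sub_mem (harcsin hp') (harcsin hq')
      ⟨div_nonneg (sub_nonneg.2 hr.1) (sub_pos.2 hab).le,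
        (div_le_one (sub_pos.2 hab)).2 (by linarith [hr.2])⟩
  have hderiv : ∀ r, HasDerivAt m (Real.cos (θ r) * c / 2) r := fun r => by
    have hθr : HasDerivAt θ c r :=
      ((((hasDerivAt_id r).sub_const a).div_const (b - a)).mul_const (θb - θa)).const_add θa
        |>.congr_deriv (by simp only [c]; ring)
    exact ((Real.hasDerivAt_sin (θ r)).comp r hθr).const_add 1 |>.div_const 2
  have hcost : ∀ r ∈ Icc a b, derivWithin m (Icc a b) r ^ 2 / (m r * (1 - m r)) = c ^ 2 := by
    intro r hr
    have hcos := Real.cos_pos_of_mem_Ioo (hθ r hr)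
    rw [(hderiv r).hasDerivWithinAt.derivWithin (uniqueDiffOn_Icc hab r hr),
      show m r * (1 - m r) = Real.cos (θ r) ^ 2 / 4 by
        simp only [m]; nlinarith [Real.sin_sq_add_cos_sq (θ r)]]
    field_simp
    ring
  refine ⟨m, ?_, fun r hr => ?_, ?_, ?_, ?_⟩
  · exact (contDiff_const.add (Real.contDiff_sin.comp (contDiff_const.add
      ((contDiff_id.sub contDiff_const).div_const _ |>.mul contDiff_const)))).div_const 2
  · have := sin_mem_Ioo_of_mem_Ioo (hθ r hr)
    exact ⟨by simp only [m]; linarith [this.1], by simp only [m]; linarith [this.2]⟩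
  · simp [m, θ, θa, Real.sin_arcsin hp'.1.le hp'.2.le]
  · simp [m, θ, θb, div_self (sub_pos.2 hab).ne', Real.sin_arcsin hq'.1.le hq'.2.le]
  · rw [intervalIntegral.integral_congr (g := fun _ => c ^ 2)
      (fun r hr => hcost r (by rwa [uIcc_of_le hab.le] at hr)), intervalIntegral.integral_const,
      smul_eq_mul]
    simp only [c]
    field_simp [(sub_pos.2 hab).ne']

theorem stmt7 (α β : ℝ) (hα : α ∈ Set.Ioo (0:ℝ) 1) (hβ : β ∈ Set.Ioo (0:ℝ) 1) :
    sInf {y : ℝ | ∃ m : ℝ → ℝ,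
        ContDiffOn ℝ 1 m (Set.Icc 0 (1/2)) ∧
        (∀ r ∈ Set.Icc (0:ℝ) (1/2), m r ∈ Set.Ioo (0:ℝ) 1) ∧
        m 0 = β ∧ m (1/2) = α ∧
        y = (Real.pi/4) * ∫ r in (0:ℝ)..(1/2),
              (derivWithin m (Set.Icc 0 (1/2)) r) ^ 2 / (m r * (1 - m r))}
      = (Real.pi/2) * (Real.arcsin (2*β - 1) - Real.arcsin (2*α - 1)) ^ 2 := by
  refine IsLeast.csInf_eq ⟨?_, ?_⟩
  · obtain ⟨m, hm, hm01, h0, h1, hcost⟩ :=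
      exists_mul_integral_eq_sq_arcsin_sub (a := 0) (b := 1 / 2) (by norm_num) hβ hα
    exact ⟨m, hm.contDiffOn, hm01, h0, h1, by linear_combination (-(Real.pi / 2)) * hcost⟩
  · rintro y ⟨m, hm, hm01, rfl, rfl, rfl⟩
    have hlower := sq_arcsin_sub_le_mul_integral (by norm_num : (0:ℝ) < 1 / 2) hm hm01
    nlinarith [Real.pi_pos]
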